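/- Let u be a monomial of degree d in n variables. Then B(x_1·u) = x_1·B(u), i.e., the smallest Borel-stable set containing x_1·u is exactly the set of products x_1·v for v in the smallest Borel-stable set containing u. Moreover gaps(x_1·u) = x_1·gaps(u). -/
import Mathlib


/-- Lexicographic "strictly greater" on exponent vectors of monomials:
the leftmost nonzero coordinate of `a - b` is positive. -/
def LexGT {n : ℕ} (a b : Fin n → ℕ) : Prop :=
  ∃ i : Fin n, (∀ j : Fin n, j < i → a j = b j) ∧ b i < a i

/-- Lexicographic "greater or equal". -/
def LexGE {n : ℕ} (a b : Fin n → ℕ) : Prop := LexGT a b ∨ a = b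

/-- Total degree of a monomial given by its exponent vector. -/
def deg {n : ℕ} (a : Fin n → ℕ) : ℕ := ∑ i, a i

/-- The lexsegment `L(u)`: all monomials of the same degree that are `≥_lex u`. -/
def Lseg {n : ℕ} (u : Fin n → ℕ) : Set (Fin n → ℕ) :=
  {v | deg v = deg u ∧ LexGE v u}

/-- The half-open lexinterval `L*(u₁,u₂) = {v : u₁ >_lex v ≥_lex u₂}`. -/
def Lstar {n : ℕ} (u₁ u₂ : Fin n → ℕ) : Set (Fin n → ℕ) :=
  {v | deg v = deg u₁ ∧ LexGT u₁ v ∧ LexGE v u₂}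

/-- The elementary Borel move `u ↦ x_i · u / x_j`. -/
def move {n : ℕ} (u : Fin n → ℕ) (i j : Fin n) : Fin n → ℕ :=
  fun k => u k + (if k = i then 1 else 0) - (if k = j then 1 else 0)

/-- A set of monomials is Borel-stable (strongly stable). -/
def BorelStable {n : ℕ} (B : Set (Fin n → ℕ)) : Prop :=
  ∀ u ∈ B, ∀ i j : Fin n, i ≤ j → 1 ≤ u j → move u i j ∈ B

/-- `B(u)`: the smallest Borel-stable set of monomials containing `u`. -/
def borelSet {n : ℕ} (u : Fin n → ℕ) : Set (Fin n → ℕ) :=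
  ⋂₀ {B : Set (Fin n → ℕ) | BorelStable B ∧ u ∈ B}

/-- The gaps of `u`: `L(u) \ B(u)`. -/
def gaps {n : ℕ} (u : Fin n → ℕ) : Set (Fin n → ℕ) := Lseg u \ borelSet u

/-- `max(u)`: the largest (1-based) index of a variable dividing `u` (0 if `u = 1`). -/
def maxIdx {n : ℕ} (u : Fin n → ℕ) : ℕ :=
  (Finset.univ.filter fun i : Fin n => 0 < u i).sup fun i => (i : ℕ) + 1

/-- `min(u)`: the smallest (1-based) index of a variable dividing `u`. -/
noncomputable def minIdx {n : ℕ} (u : Fin n → ℕ) : ℕ :=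
  sInf {m | ∃ i : Fin n, 0 < u i ∧ m = (i : ℕ) + 1}

/-- The maxgen monomial of a set `B` of monomials: its exponent at `i`
is the number of `w ∈ B` with `max(w) = i+1` (1-based). -/
noncomputable def maxgen {n : ℕ} (B : Set (Fin n → ℕ)) : Fin n → ℕ :=
  fun i => (B ∩ {w | maxIdx w = (i : ℕ) + 1}).ncard

/-- `w` is the immediate lexicographic predecessor of `u` among monomials
of the same degree: the least monomial strictly greater than `u`. -/
def IsPred {n : ℕ} (w u : Fin n → ℕ) : Prop :=
  deg w = deg u ∧ LexGT w u ∧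
    ∀ z : Fin n → ℕ, deg z = deg u → LexGT z u → LexGE z w

/-- `w` is the immediate lexicographic successor of `u` among monomials
of the same degree: the greatest monomial strictly smaller than `u`. -/
def IsSucc {n : ℕ} (w u : Fin n → ℕ) : Prop :=
  deg w = deg u ∧ LexGT u w ∧
    ∀ z : Fin n → ℕ, deg z = deg u → LexGT u z → LexGE w z

section aux
variable {n : ℕ}

lemma mem_borelSet_self (u : Fin n → ℕ) : u ∈ borelSet u := fun _ hB => hB.2

lemma borelStable_borelSet (u : Fin n → ℕ) : BorelStable (borelSet u) := by
  intro w hw i j hij hj B hB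
  exact hB.1 w (hw B hB) i j hij hj

lemma borelSet_subset {u : Fin n → ℕ} {B : Set (Fin n → ℕ)} (hB : BorelStable B) (hu : u ∈ B) :
    borelSet u ⊆ B := fun w hw => hw B ⟨hB, hu⟩

lemma move_self (v : Fin n → ℕ) (i : Fin n) : move v i i = v := by
  funext k; simp only [move]; split_ifs <;> omega

lemma move_add_single (hn : 0 < n) (w : Fin n → ℕ) (i j : Fin n) (hj : 1 ≤ w j) :
    move (w + Pi.single (⟨0, hn⟩ : Fin n) 1) i j
      = move w i j + Pi.single (⟨0, hn⟩ : Fin n) 1 := by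
  funext k
  simp only [move, Pi.add_apply, Pi.single_apply]
  by_cases hkj : k = j
  · subst hkj; split_ifs <;> omega
  · split_ifs <;> omega

lemma lexGT_add (e a b : Fin n → ℕ) : LexGT (a + e) (b + e) ↔ LexGT a b := by
  constructor
  · rintro ⟨i, h1, h2⟩
    refine ⟨i, fun j hj => ?_, ?_⟩
    · have := h1 j hj; simp only [Pi.add_apply] at this; omega
    · simp only [Pi.add_apply] at h2; omega
  · rintro ⟨i, h1, h2⟩
    refine ⟨i, fun j hj => ?_, ?_⟩
    · have := h1 j hj; simp only [Pi.add_apply]; omega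
    · simp only [Pi.add_apply]; omega

lemma lexGE_add (e a b : Fin n → ℕ) : LexGE (a + e) (b + e) ↔ LexGE a b := by
  unfold LexGE
  rw [lexGT_add]
  constructor
  · rintro (h | h); exact Or.inl h
    exact Or.inr (add_left_injective e h)
  · rintro (h | h); exact Or.inl h; exact Or.inr (by rw [h])

lemma deg_add (a b : Fin n → ℕ) : deg (a + b) = deg a + deg b := by
  simp [deg, Finset.sum_add_distrib]

lemma deg_single (i : Fin n) : deg (Pi.single i (1:ℕ)) = 1 := by
  simp [deg]

lemma lseg_add (hn : 0 < n) (u : Fin n → ℕ) :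
    Lseg (u + Pi.single (⟨0, hn⟩ : Fin n) 1)
      = (fun v => v + Pi.single (⟨0, hn⟩ : Fin n) 1) '' Lseg u := by
  set e : Fin n → ℕ := Pi.single (⟨0, hn⟩ : Fin n) 1 with he
  ext v
  constructor
  · rintro ⟨hd, hge⟩
    have hv0 : 1 ≤ v ⟨0, hn⟩ := by
      rcases hge with ⟨i, h1, h2⟩ | h
      · have hle : (⟨0, hn⟩ : Fin n) ≤ i := by rw [Fin.le_def]; exact Nat.zero_le _
        rcases eq_or_lt_of_le hle with hi | hi
        · have : (⟨0, hn⟩ : Fin n) = i := hi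
          rw [← this] at h2
          have : (u + e) ⟨0, hn⟩ = u ⟨0, hn⟩ + 1 := by simp [he]
          omega
        · have := h1 ⟨0, hn⟩ hi
          have h0 : (u + e) ⟨0, hn⟩ = u ⟨0, hn⟩ + 1 := by
            simp only [Pi.add_apply, he, Pi.single_eq_same]
          omega
      · have hv : v ⟨0, hn⟩ = (u + e) ⟨0, hn⟩ := by rw [h]
        have h0 : (u + e) ⟨0, hn⟩ = u ⟨0, hn⟩ + 1 := by
          simp only [Pi.add_apply, he, Pi.single_eq_same]
        omega
    set v' : Fin n → ℕ := fun k => v k - e k with hv'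
    have hveq : v' + e = v := by
      funext k
      simp only [Pi.add_apply, hv', he, Pi.single_apply]
      by_cases hk : k = ⟨0, hn⟩
      · subst hk; rw [if_pos rfl]; omega
      · simp [hk]
    refine ⟨v', ⟨?_, ?_⟩, hveq⟩
    · have := hd
      rw [← hveq, deg_add, deg_add] at this
      omega
    · rw [← hveq] at hge
      exact (lexGE_add e v' u).mp hge
  · rintro ⟨w, ⟨hd, hge⟩, rfl⟩
    exact ⟨by rw [deg_add, deg_add, hd], (lexGE_add e w u).mpr hge⟩

end aux

/-- `B(x_1·u) = x_1·B(u)` and `gaps(x_1·u) = x_1·gaps(u)`. -/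
theorem stmt19 {n d : ℕ} (hn : 0 < n) (u : Fin n → ℕ) (hu : deg u = d) :
    borelSet (u + Pi.single (⟨0, hn⟩ : Fin n) 1)
      = (fun v => v + Pi.single (⟨0, hn⟩ : Fin n) 1) '' borelSet u
    ∧ gaps (u + Pi.single (⟨0, hn⟩ : Fin n) 1)
      = (fun v => v + Pi.single (⟨0, hn⟩ : Fin n) 1) '' gaps u := by
  set e : Fin n → ℕ := Pi.single (⟨0, hn⟩ : Fin n) 1 with he
  have hB : borelSet (u + e) = (fun v => v + e) '' borelSet u := by
    apply Set.Subset.antisymm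
    · apply borelSet_subset
      · rintro w ⟨w', hw', rfl⟩ i j hij hj
        by_cases hwj : 1 ≤ w' j
        · rw [move_add_single hn w' i j hwj]
          exact ⟨move w' i j, borelStable_borelSet u w' hw' i j hij hwj, rfl⟩
        · have hje : 1 ≤ e j := by
            simp only [Pi.add_apply] at hj; omega
          have hj0 : j = ⟨0, hn⟩ := by
            by_contra h
            simp [he, Pi.single_apply, h] at hje
          have hij' : i = j := by
            apply le_antisymm hij
            rw [hj0, Fin.le_def]; exact Nat.zero_le _
          subst hij'
          rw [move_self]
          exact ⟨w', hw', rfl⟩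
      · exact ⟨u, mem_borelSet_self u, rfl⟩
    · rintro _ ⟨w, hw, rfl⟩
      have key : borelSet u ⊆ {w | w + e ∈ borelSet (u + e)} := by
        apply borelSet_subset
        · intro w' hw' i j hij hj
          have hmem := borelStable_borelSet (u + e) (w' + e) hw' i j hij
            (by simp only [Pi.add_apply]; omega)
          rw [move_add_single hn w' i j hj] at hmem
          exact hmem
        · exact mem_borelSet_self (u + e)
      exact key hw
  refine ⟨hB, ?_⟩
  have hinj : Function.Injective (fun v : Fin n → ℕ => v + e) := add_left_injective e
  rw [gaps, gaps, hB, lseg_add hn u, ← Set.image_diff hinj]
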